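/- Let H=(V,E,w) be a honeycomb and F ⊆ E. If every vertex of H is contained in at least two distinct maximal lines of H, each of which contains an edge from F, then H is F-extreme. -/

import Mathlib

open scoped BigOperators

attribute [local instance] Classical.propDecidable

noncomputable section

/-- Points of the plane. -/
abbrev Pt : Type := ℝ × ℝ

/-- Inner product on the plane. -/
def pdot (a b : Pt) : ℝ := a.1 * b.1 + a.2 * b.2

/-- The three generating vectors ξ₁ = (1,0), ξ₂ = (−1/2, √3/2), ξ₃ = (−1/2, −√3/2). -/
noncomputable def xiv : Fin 3 → Pt
  | 0 => ((1 : ℝ), (0 : ℝ))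
  | 1 => (-(1 / 2 : ℝ), Real.sqrt 3 / 2)
  | 2 => (-(1 / 2 : ℝ), -(Real.sqrt 3 / 2))

/-- Dual coordinates d_i(x) = −x·ξ_i. -/
noncomputable def dcoord (i : Fin 3) (x : Pt) : ℝ := -(pdot x (xiv i))

/-- Direction of the ray Ξ_i^s(·): ξ_i rotated by −90° for s = +(true), by +90° for
s = −(false), so that Ξ_i⁺(v)−v, ℝ₊ξ_i, Ξ_i⁻(v)−v follow anticlockwise. -/
noncomputable def rayDir (i : Fin 3) (s : Bool) : Pt :=
  if s then ((xiv i).2, -(xiv i).1) else (-(xiv i).2, (xiv i).1)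

/-- The ray Ξ_i^s(v). -/
def XiRay (i : Fin 3) (s : Bool) (v : Pt) : Set Pt :=
  {x | ∃ t : ℝ, 0 ≤ t ∧ x = v + t • rayDir i s}

/-- A finite line (nondegenerate segment). -/
def IsSegL (S : Set Pt) : Prop := ∃ a b : Pt, a ≠ b ∧ S = segment ℝ a b

/-- A semiinfinite line (ray) with end a. -/
def IsRayFrom (a : Pt) (S : Set Pt) : Prop :=
  ∃ d : Pt, d ≠ 0 ∧ S = {x | ∃ t : ℝ, 0 ≤ t ∧ x = a + t • d}

/-- A semiinfinite line (ray). -/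
def IsRayL (S : Set Pt) : Prop := ∃ a : Pt, IsRayFrom a S

/-- A fully infinite line. -/
def IsFullLineL (S : Set Pt) : Prop := ∃ a d : Pt, d ≠ 0 ∧ S = {x | ∃ t : ℝ, x = a + t • d}

/-- A line: a segment, a ray or a full line. -/
def IsLineL (S : Set Pt) : Prop := IsSegL S ∨ IsRayL S ∨ IsFullLineL S

/-- `S` is perpendicular to ξ_i, i.e. the dual coordinate d_i is constant on S. -/
def PerpTo (i : Fin 3) (S : Set Pt) : Prop := ∀ x ∈ S, ∀ y ∈ S, pdot (x - y) (xiv i) = 0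

/-- w_i^s(v): the total weight of the lines of the system whose intersection with
Ξ_i^s(v) contains v and is a line (not a point). -/
noncomputable def wis (L : Finset (Set Pt)) (w : Set Pt → ℤ) (i : Fin 3) (s : Bool)
    (v : Pt) : ℤ :=
  ∑ ℓ ∈ L.filter (fun ℓ => v ∈ ℓ ∧ IsLineL (ℓ ∩ XiRay i s v)), w ℓ

/-- A Ξ-system: a finite set of lines, each perpendicular to some ξ_i. -/
def IsXiSystem (L : Finset (Set Pt)) : Prop := ∀ ℓ ∈ L, IsLineL ℓ ∧ ∃ i : Fin 3, PerpTo i ℓ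

/-- A pre-honeycomb: a Ξ-system with all w_i^s(v) nonnegative satisfying the
divergency (zero-tension) condition at every point. -/
def IsPreHoneycomb (L : Finset (Set Pt)) (w : Set Pt → ℤ) : Prop :=
  IsXiSystem L ∧ (∀ (v : Pt) (i : Fin 3) (s : Bool), 0 ≤ wis L w i s v) ∧
  ∀ (v : Pt) (i j : Fin 3),
    wis L w i true v - wis L w i false v = wis L w j true v - wis L w j false v

/-- The divergency div_w(v). -/
noncomputable def divw (L : Finset (Set Pt)) (w : Set Pt → ℤ) (v : Pt) : ℤ :=
  wis L w 0 true v - wis L w 0 false v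

/-- An interior (non-end) point of a line. -/
def InteriorPt (S : Set Pt) (x : Pt) : Prop :=
  x ∈ S ∧ ∃ d : Pt, d ≠ 0 ∧ ∃ ε : ℝ, 0 < ε ∧ ∀ t : ℝ, |t| ≤ ε → x + t • d ∈ S

/-- `v` is an end of the line `S` (so `S` is incident to `v` as a graph edge). -/
def IsEnd (v : Pt) (S : Set Pt) : Prop := v ∈ S ∧ ¬ InteriorPt S v

/-- A honeycomb: a (non-standard) planar graph with a nonempty finite vertex set, whose
edges are positively weighted lines, each vertex incident with at least 3 edges, no
interior point of an edge lying on another edge, the ends of edges being vertices, and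
the weighted edge set forming a pre-honeycomb. -/
structure Honeycomb : Type where
  verts : Finset Pt
  edges : Finset (Set Pt)
  w : Set Pt → ℤ
  verts_nonempty : verts.Nonempty
  degree : ∀ v ∈ verts, 3 ≤ (edges.filter fun e => IsEnd v e).card
  no_cross : ∀ e ∈ edges, ∀ e' ∈ edges, e ≠ e' → ∀ x : Pt, InteriorPt e x → x ∉ e'
  w_pos : ∀ e ∈ edges, 0 < w e
  ends_mem : ∀ e ∈ edges, ∀ x : Pt, IsEnd x e → x ∈ verts
  edge_touch : ∀ e ∈ edges, ∃ v ∈ verts, v ∈ e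
  pre : IsPreHoneycomb edges w

/-- Honeycombs H and H' are conformable via the bijections α (on vertices) and
β (on edges): incidences, weights and the containing rays Ξ_i^s are preserved. -/
def Conformable (H H' : Honeycomb) (α : Pt → Pt) (β : Set Pt → Set Pt) : Prop :=
  Set.BijOn α (↑H.verts) (↑H'.verts) ∧ Set.BijOn β (↑H.edges) (↑H'.edges) ∧
  ∀ v ∈ H.verts, ∀ e ∈ H.edges, IsEnd v e →
    IsEnd (α v) (β e) ∧ H.w e = H'.w (β e) ∧
      ∀ (i : Fin 3) (s : Bool), e ⊆ XiRay i s v → β e ⊆ XiRay i s (α v)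

/-- The two edges have the same constant dual coordinate. -/
def SameDc (e e' : Set Pt) : Prop :=
  ∀ i : Fin 3, PerpTo i e → PerpTo i e' ∧ ∀ x ∈ e, ∀ y ∈ e', dcoord i x = dcoord i y

/-- Equality of honeycombs (weights compared on the edges). -/
def HoneycombEqOn (H H' : Honeycomb) : Prop :=
  H.verts = H'.verts ∧ H.edges = H'.edges ∧ ∀ e ∈ H.edges, H.w e = H'.w e

/-- H is F-extreme: no honeycomb different from H is conformable to H with the same
constant dual coordinates on F. -/
def FExtreme (H : Honeycomb) (F : Finset (Set Pt)) : Prop :=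
  ¬ ∃ (H' : Honeycomb) (α : Pt → Pt) (β : Set Pt → Set Pt),
      Conformable H H' α β ∧ (∀ e ∈ F, SameDc e (β e)) ∧ ¬ HoneycombEqOn H H'

/-- A maximal line of H: a line covered by edges of H, maximal with this property. -/
def MaximalLine (H : Honeycomb) (ℓ : Set Pt) : Prop :=
  IsLineL ℓ ∧ (ℓ ⊆ ⋃ e ∈ H.edges, e) ∧
  ∀ ℓ' : Set Pt, IsLineL ℓ' → (ℓ' ⊆ ⋃ e ∈ H.edges, e) → ℓ ⊆ ℓ' → ℓ' = ℓ

/-!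
Let `H'` be conformable to `H` with the same dual coordinates on `F`. On a maximal line `ℓ ⊥ ξᵢ`
the images of two edges meeting at a vertex `v` lie on rays `Ξᵢ^±(α v)`, hence have the same `dᵢ`;
as `ℓ` is connected and covered by its edges, all of them have the `dᵢ` of the image of the
`F`-edge in `ℓ`, which is `dᵢ(ℓ)`. So `dᵢ(α v) = dᵢ(v)` for every vertex `v ∈ ℓ`. Two maximal
lines through a vertex are perpendicular to different `ξᵢ`, so every vertex is fixed. An edge is
then determined by its ends and, if it is a ray, by the direction of the ray; hence `H' = H`.
-/

open Set AffineMap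

lemma Real.eq_Icc_or_Ici_or_Iic_or_univ {T : Set ℝ} (hc : IsClosed T) (ho : T.OrdConnected)
    (hne : T.Nonempty) :
    (∃ a b, T = Icc a b) ∨ (∃ a, T = Ici a) ∨ (∃ b, T = Iic b) ∨ T = univ := by
  by_cases hb : BddBelow T <;> by_cases ha : BddAbove T
  · exact Or.inl ⟨_, _, (subset_Icc_csInf_csSup hb ha).antisymm
      (ho.out (hc.csInf_mem hne hb) (hc.csSup_mem hne ha))⟩
  · refine Or.inr (Or.inl ⟨_, Subset.antisymm (fun x hx => csInf_le hb hx) fun z hz => ?_⟩)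
    obtain ⟨y, hy, hzy⟩ := not_bddAbove_iff.mp ha z
    exact ho.out (hc.csInf_mem hne hb) hy ⟨hz, hzy.le⟩
  · refine Or.inr (Or.inr (Or.inl ⟨_, Subset.antisymm (fun x hx => le_csSup ha hx) fun z hz => ?_⟩))
    obtain ⟨y, hy, hyz⟩ := not_bddBelow_iff.mp hb z
    exact ho.out hy (hc.csSup_mem hne ha) ⟨hyz.le, hz⟩
  · refine Or.inr (Or.inr (Or.inr (eq_univ_of_forall fun z => ?_)))
    obtain ⟨y, hy, hyz⟩ := not_bddBelow_iff.mp hb z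
    obtain ⟨y', hy', hzy'⟩ := not_bddAbove_iff.mp ha z
    exact ho.out hy hy' ⟨hyz.le, hzy'.le⟩

section Topology

variable {X : Type*} [TopologicalSpace X] {s : Set X}

lemma IsPreconnected.subset_of_subset_union_finite [T1Space X] (hs : IsPreconnected s)
    (hinf : s.Infinite) {A Z : Set X} (hA : IsClosed A) (hZ : Z.Finite) (hsub : s ⊆ A ∪ Z) :
    s ⊆ A := by
  by_contra hsA
  obtain ⟨x, hxs, hxA⟩ := not_subset.mp hsA
  have hsub' : s ⊆ A ∪ (Z \ A) := by rwa [union_sdiff_self]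
  have hmiss : ∀ y ∈ s, y ∉ A := fun y hy hyA => by
    obtain ⟨_, -, h, -, h'⟩ := isPreconnected_closed_iff.mp hs A _ hA hZ.sdiff.isClosed hsub'
      ⟨y, hy, hyA⟩ ⟨x, hxs, (hsub' hxs).resolve_left hxA⟩
    exact h' h
  exact hinf (hZ.subset fun y hy => (hsub hy).resolve_left (hmiss y hy))

lemma IsPreconnected.exists_mem_of_closed_cover {ι : Type*} (hs : IsPreconnected s)
    {I : Finset ι} {f : ι → Set X} (hf : ∀ i ∈ I, IsClosed (f i)) (hcov : s ⊆ ⋃ i ∈ I, f i)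
    {P : ι → Prop} (hP : ∀ i ∈ I, ∀ j ∈ I, (f i ∩ f j).Nonempty → P i → P j)
    {i₀ : ι} (hi₀ : i₀ ∈ I) (hPi₀ : P i₀) (hmeet : (s ∩ f i₀).Nonempty) :
    ∀ x ∈ s, ∃ i ∈ I, P i ∧ x ∈ f i := by
  set A := ⋃ i ∈ I.filter P, f i
  set B := ⋃ i ∈ I.filter (¬ P ·), f i
  have hclosed : ∀ J ⊆ I, IsClosed (⋃ i ∈ J, f i) := fun J hJ =>
    J.finite_toSet.isClosed_biUnion fun i hi => hf i (hJ hi)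
  have hAB : s ⊆ A ∪ B := by
    intro x hx
    obtain ⟨i, hi, hxi⟩ := mem_iUnion₂.mp (hcov hx)
    by_cases hPi : P i
    · exact Or.inl (mem_iUnion₂.mpr ⟨i, Finset.mem_filter.mpr ⟨hi, hPi⟩, hxi⟩)
    · exact Or.inr (mem_iUnion₂.mpr ⟨i, Finset.mem_filter.mpr ⟨hi, hPi⟩, hxi⟩)
  have hdisj : ∀ x, x ∈ A → x ∉ B := by
    intro x hxA hxB
    obtain ⟨i, hi, hxi⟩ := mem_iUnion₂.mp hxA
    obtain ⟨j, hj, hxj⟩ := mem_iUnion₂.mp hxB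
    rw [Finset.mem_filter] at hi hj
    exact hj.2 (hP i hi.1 j hj.1 ⟨x, hxi, hxj⟩ hi.2)
  have hsA : (s ∩ A).Nonempty := by
    obtain ⟨x, hxs, hxi₀⟩ := hmeet
    exact ⟨x, hxs, mem_iUnion₂.mpr ⟨i₀, Finset.mem_filter.mpr ⟨hi₀, hPi₀⟩, hxi₀⟩⟩
  intro x hx
  have hxA : x ∈ A := by
    refine (hAB hx).resolve_right fun hxB => ?_
    obtain ⟨y, -, hyA, hyB⟩ := isPreconnected_closed_iff.mp hs A B
      (hclosed _ (Finset.filter_subset _ _)) (hclosed _ (Finset.filter_subset _ _)) hAB hsA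
      ⟨x, hx, hxB⟩
    exact hdisj y hyA hyB
  obtain ⟨i, hi, hxi⟩ := mem_iUnion₂.mp hxA
  rw [Finset.mem_filter] at hi
  exact ⟨i, hi.1, hi.2, hxi⟩

end Topology

section LineMap

variable {E : Type*} [AddCommGroup E] [Module ℝ E]

lemma lineMap_add_right (v r : E) (t : ℝ) : lineMap v (v + r) t = v + t • r := by
  rw [lineMap_apply_module']
  module

lemma lineMap_image_Ici (p q : E) (a : ℝ) :
    lineMap p q '' Ici a = {x | ∃ t : ℝ, 0 ≤ t ∧ x = lineMap p q a + t • (q - p)} := by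
  ext x
  simp only [mem_image, mem_Ici, mem_ofPred_eq, lineMap_apply_module']
  constructor
  · rintro ⟨t, ht, rfl⟩
    exact ⟨t - a, sub_nonneg.mpr ht, by module⟩
  · rintro ⟨t, ht, rfl⟩
    exact ⟨a + t, le_add_of_nonneg_right ht, by module⟩

lemma lineMap_image_Iic (p q : E) (b : ℝ) :
    lineMap p q '' Iic b = {x | ∃ t : ℝ, 0 ≤ t ∧ x = lineMap p q b + t • (p - q)} := by
  ext x
  simp only [mem_image, mem_Iic, mem_ofPred_eq, lineMap_apply_module']
  constructor
  · rintro ⟨t, ht, rfl⟩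
    exact ⟨b - t, sub_nonneg.mpr ht, by module⟩
  · rintro ⟨t, ht, rfl⟩
    exact ⟨b - t, sub_le_self b ht, by module⟩

lemma setOf_ray_eq_lineMap_image (a d : E) :
    {x | ∃ t : ℝ, 0 ≤ t ∧ x = a + t • d} = lineMap a (a + d) '' Ici (0 : ℝ) := by
  rw [lineMap_image_Ici]
  simp

lemma range_lineMap_add_right (a d : E) :
    range (lineMap a (a + d) : ℝ → E) = {x | ∃ t : ℝ, x = a + t • d} := by
  ext x
  simp [lineMap_add_right, eq_comm]

end LineMap

lemma isClosedMap_lineMap {E : Type*} [NormedAddCommGroup E] [NormedSpace ℝ E] (p q : E) :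
    IsClosedMap (lineMap p q : ℝ → E) := by
  have h : (lineMap p q : ℝ → E) = (· + p) ∘ fun t : ℝ => t • (q - p) :=
    funext fun t => lineMap_apply_module' p q t
  rw [h]
  exact (Homeomorph.addRight p).isClosedMap.comp (isClosedMap_smul_left (q - p))

lemma isLineL_lineMap_image {p q : Pt} (hpq : p ≠ q) {T : Set ℝ} (hc : IsClosed T)
    (ho : T.OrdConnected) (hT : T.Nontrivial) : IsLineL (lineMap p q '' T) := by
  have hinj := lineMap_injective ℝ hpq
  rcases Real.eq_Icc_or_Ici_or_Iic_or_univ hc ho hT.nonempty with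
    ⟨a, b, rfl⟩ | ⟨a, rfl⟩ | ⟨b, rfl⟩ | rfl
  · have hab : a < b := by
      by_contra! h
      exact hT.not_subsingleton (subsingleton_Icc_of_ge h)
    exact Or.inl ⟨_, _, hinj.ne hab.ne, by rw [← segment_eq_Icc hab.le, image_segment]⟩
  · exact Or.inr (Or.inl ⟨_, q - p, sub_ne_zero.mpr hpq.symm, lineMap_image_Ici p q a⟩)
  · exact Or.inr (Or.inl ⟨_, p - q, sub_ne_zero.mpr hpq, lineMap_image_Iic p q b⟩)
  · refine Or.inr (Or.inr ⟨p, q - p, sub_ne_zero.mpr hpq.symm, ?_⟩)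
    rw [image_univ, ← range_lineMap_add_right, add_sub_cancel]

lemma IsLineL.exists_eq_lineMap_image {S : Set Pt} (h : IsLineL S) :
    ∃ p q : Pt, p ≠ q ∧ ∃ T : Set ℝ, IsClosed T ∧ T.OrdConnected ∧ T.Nontrivial ∧
      S = lineMap p q '' T := by
  rcases h with ⟨a, b, hab, rfl⟩ | ⟨a, ha⟩ | ⟨a, d, hd, rfl⟩
  · refine ⟨a, b, hab, Icc 0 1, isClosed_Icc, inferInstance,
      ⟨0, by simp, 1, by simp, zero_ne_one⟩, ?_⟩
    rw [← segment_eq_Icc zero_le_one, image_segment]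
    simp
  · obtain ⟨d, hd, rfl⟩ := ha
    exact ⟨a, a + d, by simpa [eq_comm] using hd, Ici 0, isClosed_Ici, inferInstance,
      ⟨0, by simp, 1, by simp, zero_ne_one⟩, setOf_ray_eq_lineMap_image a d⟩
  · refine ⟨a, a + d, by simpa [eq_comm] using hd, univ, isClosed_univ, inferInstance,
      nontrivial_univ, ?_⟩
    rw [image_univ, range_lineMap_add_right]

namespace IsLineL

variable {S S₁ S₂ : Set Pt}

lemma isClosed (h : IsLineL S) : IsClosed S := by
  obtain ⟨p, q, -, T, hc, -, -, rfl⟩ := h.exists_eq_lineMap_image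
  exact isClosedMap_lineMap p q T hc

lemma convex (h : IsLineL S) : Convex ℝ S := by
  obtain ⟨p, q, -, T, -, ho, -, rfl⟩ := h.exists_eq_lineMap_image
  exact ho.convex.affine_image (lineMap p q)

lemma nontrivial (h : IsLineL S) : S.Nontrivial := by
  obtain ⟨p, q, hpq, T, -, -, hT, rfl⟩ := h.exists_eq_lineMap_image
  exact hT.image (lineMap_injective ℝ hpq)

lemma infinite (h : IsLineL S) : S.Infinite :=
  h.convex.isPreconnected.infinite_of_nontrivial h.nontrivial

lemma subset_affineSpan (h : IsLineL S) : ∃ p q : Pt, p ≠ q ∧ S ⊆ line[ℝ, p, q] := by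
  obtain ⟨p, q, hpq, T, -, -, -, rfl⟩ := h.exists_eq_lineMap_image
  exact ⟨p, q, hpq, image_subset_iff.mpr fun t _ => lineMap_mem_affineSpan_pair t p q⟩

lemma subset_affineSpan_of_mem (h : IsLineL S) {x y : Pt} (hx : x ∈ S) (hy : y ∈ S)
    (hxy : x ≠ y) : S ⊆ line[ℝ, x, y] := by
  obtain ⟨p, q, -, hS⟩ := h.subset_affineSpan
  rwa [affineSpan_pair_eq_of_mem_of_mem_of_ne (hS hx) (hS hy) hxy]

lemma union (h₁ : IsLineL S₁) (h₂ : IsLineL S₂) {p q : Pt} (hpq : p ≠ q)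
    (hS₁ : S₁ ⊆ line[ℝ, p, q]) (hS₂ : S₂ ⊆ line[ℝ, p, q]) (hmeet : (S₁ ∩ S₂).Nonempty) :
    IsLineL (S₁ ∪ S₂) := by
  have hrange : ∀ {S : Set Pt}, S ⊆ line[ℝ, p, q] → S ⊆ range (lineMap p q) :=
    fun hS x hx => mem_affineSpan_pair_iff_exists_lineMap_eq.mp (hS hx)
  rw [← image_preimage_eq_of_subset (union_subset (hrange hS₁) (hrange hS₂))]
  refine isLineL_lineMap_image hpq
    ((h₁.isClosed.union h₂.isClosed).preimage lineMap_continuous) ?_ ?_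
  · rw [← isPreconnected_iff_ordConnected, preimage_union]
    obtain ⟨x, hx₁, hx₂⟩ := hmeet
    obtain ⟨t, rfl⟩ := hrange hS₁ hx₁
    exact (h₁.convex.affine_preimage _).isPreconnected.union t hx₁ hx₂
      (h₂.convex.affine_preimage _).isPreconnected
  · obtain ⟨x, hx, y, hy, hxy⟩ := h₁.nontrivial
    obtain ⟨s, rfl⟩ := hrange hS₁ hx
    obtain ⟨t, rfl⟩ := hrange hS₁ hy
    exact ⟨s, Or.inl hx, t, Or.inl hy, fun h => hxy (h ▸ rfl)⟩

end IsLineL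

lemma interiorPt_lineMap_of_convex {S : Set Pt} (hS : Convex ℝ S) {p q : Pt} (hpq : p ≠ q)
    {t₁ t₂ t : ℝ} (h₁ : lineMap p q t₁ ∈ S) (h₂ : lineMap p q t₂ ∈ S) (ht : t ∈ Ioo t₁ t₂) :
    InteriorPt S (lineMap p q t) := by
  have hsub : lineMap p q '' Icc t₁ t₂ ⊆ S := by
    rw [← segment_eq_Icc (ht.1.trans ht.2).le, image_segment]
    exact hS.segment_subset h₁ h₂
  refine ⟨hsub ⟨t, Ioo_subset_Icc_self ht, rfl⟩, q - p, sub_ne_zero.mpr hpq.symm,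
    min (t - t₁) (t₂ - t), lt_min (sub_pos.mpr ht.1) (sub_pos.mpr ht.2), fun s hs => ?_⟩
  have hs' := abs_le.mp (hs.trans (min_le_left _ _))
  have hs'' := abs_le.mp (hs.trans (min_le_right _ _))
  refine hsub ⟨t + s, ⟨by linarith, by linarith⟩, ?_⟩
  simp only [lineMap_apply_module']
  module

lemma not_interiorPt_of_subset_ray {S : Set Pt} {a d : Pt}
    (hS : S ⊆ {x | ∃ t : ℝ, 0 ≤ t ∧ x = a + t • d}) : ¬ InteriorPt S a := by
  rintro ⟨-, d₀, hd₀, ε, hε, hmem⟩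
  obtain ⟨t₁, ht₁, h₁⟩ := hS (hmem ε (abs_of_pos hε).le)
  obtain ⟨t₂, ht₂, h₂⟩ := hS (hmem (-ε) (by rw [abs_neg, abs_of_pos hε]))
  have hsum : (t₁ + t₂) • d = 0 := by
    rw [add_smul, ← add_left_cancel h₁, ← add_left_cancel h₂, neg_smul, add_neg_cancel]
  have ht : t₁ • d = 0 := by
    rcases smul_eq_zero.mp hsum with h | h
    · rw [show t₁ = 0 by linarith, zero_smul]
    · rw [h, smul_zero]
  exact smul_ne_zero hε.ne' hd₀ (by rw [add_left_cancel h₁, ht])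

lemma isEnd_left_segment (a b : Pt) : IsEnd a (segment ℝ a b) := by
  refine ⟨left_mem_segment ℝ a b, not_interiorPt_of_subset_ray (d := b - a) ?_⟩
  rw [segment_eq_image']
  rintro _ ⟨θ, hθ, rfl⟩
  exact ⟨θ, hθ.1, rfl⟩

lemma isEnd_right_segment (a b : Pt) : IsEnd b (segment ℝ a b) :=
  segment_symm ℝ a b ▸ isEnd_left_segment b a

lemma IsEnd.eq_or_eq_of_segment {a b z : Pt} (hz : IsEnd z (segment ℝ a b)) :
    z = a ∨ z = b := by
  obtain ⟨θ, hθ, rfl⟩ := (segment_eq_image_lineMap ℝ a b ▸ hz.1 : _)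
  rcases eq_or_ne a b with rfl | hab
  · simp
  rcases hθ.1.eq_or_lt with rfl | h₀
  · simp
  rcases hθ.2.eq_or_lt with rfl | h₁
  · simp
  refine absurd (interiorPt_lineMap_of_convex (convex_segment a b) hab ?_ ?_ ⟨h₀, h₁⟩) hz.2
  · simpa using left_mem_segment ℝ a b
  · simpa using right_mem_segment ℝ a b

lemma IsEnd.eq_of_ray {a d z : Pt} (hz : IsEnd z {x | ∃ t : ℝ, 0 ≤ t ∧ x = a + t • d}) :
    z = a := by
  rw [setOf_ray_eq_lineMap_image] at hz
  obtain ⟨t, ht, rfl⟩ := hz.1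
  rcases eq_or_ne a (a + d) with had | had
  · simp [← had]
  rcases (mem_Ici.mp ht).eq_or_lt with rfl | htpos
  · simp
  have hconv : Convex ℝ (lineMap a (a + d) '' Ici (0 : ℝ)) := (convex_Ici 0).affine_image _
  exact absurd (interiorPt_lineMap_of_convex hconv had (mem_image_of_mem _ self_mem_Ici)
    (mem_image_of_mem _ (mem_Ici.mpr (by linarith : (0 : ℝ) ≤ 2 * t)))
    ⟨htpos, by linarith⟩) hz.2

lemma not_isEnd_fullLine {a d z : Pt} (hd : d ≠ 0) :
    ¬ IsEnd z {x | ∃ t : ℝ, x = a + t • d} := by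
  rintro ⟨⟨t, rfl⟩, hint⟩
  exact hint ⟨⟨t, rfl⟩, d, hd, 1, one_pos, fun s _ => ⟨t + s, by module⟩⟩

namespace IsLineL

variable {S : Set Pt}

lemma eq_segment_of_isEnd (h : IsLineL S) {a b : Pt} (hab : a ≠ b) (ha : IsEnd a S)
    (hb : IsEnd b S) : S = segment ℝ a b := by
  rcases h with ⟨x, y, -, rfl⟩ | ⟨q, d, -, rfl⟩ | ⟨q, d, hd, rfl⟩
  · rcases ha.eq_or_eq_of_segment with rfl | rfl <;>
      rcases hb.eq_or_eq_of_segment with rfl | rfl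
    exacts [absurd rfl hab, rfl, segment_symm ℝ _ _, absurd rfl hab]
  · exact absurd (ha.eq_of_ray.trans hb.eq_of_ray.symm) hab
  · exact absurd ha (not_isEnd_fullLine hd)

lemma eq_ray_of_isEnd (h : IsLineL S) {v r : Pt} (hv : IsEnd v S)
    (hends : ∀ y, IsEnd y S → y = v) (hS : S ⊆ {x | ∃ t : ℝ, 0 ≤ t ∧ x = v + t • r}) :
    S = {x | ∃ t : ℝ, 0 ≤ t ∧ x = v + t • r} := by
  rcases h with ⟨a, b, hab, rfl⟩ | ⟨q, d, hd, rfl⟩ | ⟨q, d, hd, rfl⟩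
  · exact absurd ((hends a (isEnd_left_segment a b)).trans
      (hends b (isEnd_right_segment a b)).symm) hab
  · obtain rfl := hv.eq_of_ray
    obtain ⟨c, hc, hdc⟩ := hS ⟨1, zero_le_one, by rw [one_smul]⟩
    replace hdc : d = c • r := add_left_cancel hdc
    have hc0 : c ≠ 0 := by rintro rfl; exact hd (by rw [hdc, zero_smul])
    ext x
    constructor
    · rintro ⟨t, ht, rfl⟩
      exact ⟨t * c, mul_nonneg ht hc, by rw [hdc, smul_smul]⟩
    · rintro ⟨t, ht, rfl⟩
      exact ⟨t / c, div_nonneg ht hc, by rw [hdc, smul_smul, div_mul_cancel₀ t hc0]⟩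
  · exact absurd hv (not_isEnd_fullLine hd)

end IsLineL

lemma pdot_sub_left (x y u : Pt) : pdot (x - y) u = pdot x u - pdot y u := by
  simp only [pdot, Prod.fst_sub, Prod.snd_sub]; ring

lemma pdot_smul_left (c : ℝ) (x u : Pt) : pdot (c • x) u = c * pdot x u := by
  simp only [pdot, Prod.smul_fst, Prod.smul_snd, smul_eq_mul]; ring

lemma dcoord_eq_iff {i : Fin 3} {x y : Pt} :
    dcoord i x = dcoord i y ↔ pdot (x - y) (xiv i) = 0 := by
  rw [dcoord, dcoord, pdot_sub_left, neg_inj, sub_eq_zero]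

lemma xiv_normSq (i : Fin 3) : (xiv i).1 ^ 2 + (xiv i).2 ^ 2 = 1 := by
  have h3 : Real.sqrt 3 ^ 2 = 3 := Real.sq_sqrt (by norm_num)
  fin_cases i <;> simp [xiv] <;> linear_combination h3 / 4

lemma rayDir_false (i : Fin 3) : rayDir i false = -rayDir i true := by
  simp [rayDir]

lemma rayDir_ne_zero (i : Fin 3) (s : Bool) : rayDir i s ≠ 0 := by
  intro h
  have h₁ := congrArg Prod.fst h
  have h₂ := congrArg Prod.snd h
  have := xiv_normSq i
  cases s <;> simp only [rayDir, Bool.false_eq_true, if_false, if_true, Prod.fst_zero,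
    Prod.snd_zero, neg_eq_zero] at h₁ h₂ <;> simp [h₁, h₂] at this

lemma pdot_rayDir (i : Fin 3) (s : Bool) : pdot (rayDir i s) (xiv i) = 0 := by
  cases s <;> simp only [rayDir, Bool.false_eq_true, if_false, if_true, pdot] <;> ring

/-- `rayDir i true` is `ξᵢ` turned by a right angle, and `ξᵢ` is a unit vector. -/
lemma eq_smul_rayDir_of_pdot_eq_zero {u : Pt} {i : Fin 3} (h : pdot u (xiv i) = 0) :
    u = pdot u (rayDir i true) • rayDir i true := by
  have hn := xiv_normSq i
  simp only [pdot, rayDir, if_true] at h ⊢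
  ext <;> simp only [Prod.smul_fst, Prod.smul_snd, smul_eq_mul]
  · linear_combination (xiv i).1 * h - u.1 * hn
  · linear_combination (xiv i).2 * h - u.2 * hn

lemma eq_zero_of_pdot_eq_zero {a b u : Pt} (hab : a.1 * b.2 - a.2 * b.1 ≠ 0)
    (ha : pdot u a = 0) (hb : pdot u b = 0) : u = 0 := by
  simp only [pdot] at ha hb
  ext
  · exact (mul_eq_zero.mp (by linear_combination b.2 * ha - a.2 * hb :
      u.1 * (a.1 * b.2 - a.2 * b.1) = 0)).resolve_right hab
  · exact (mul_eq_zero.mp (by linear_combination a.1 * hb - b.1 * ha :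
      u.2 * (a.1 * b.2 - a.2 * b.1) = 0)).resolve_right hab

lemma xiv_cross_ne_zero {i j : Fin 3} (hij : i ≠ j) :
    (xiv i).1 * (xiv j).2 - (xiv i).2 * (xiv j).1 ≠ 0 := by
  have h3 : 0 < Real.sqrt 3 := by positivity
  fin_cases i <;> fin_cases j <;> simp [xiv] at hij ⊢ <;> nlinarith

lemma eq_of_dcoord_eq {i j : Fin 3} (hij : i ≠ j) {x y : Pt} (hi : dcoord i x = dcoord i y)
    (hj : dcoord j x = dcoord j y) : x = y :=
  sub_eq_zero.mp (eq_zero_of_pdot_eq_zero (xiv_cross_ne_zero hij) (dcoord_eq_iff.mp hi)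
    (dcoord_eq_iff.mp hj))

lemma dcoord_eq_of_mem_XiRay {i : Fin 3} {s : Bool} {v x : Pt} (hx : x ∈ XiRay i s v) :
    dcoord i x = dcoord i v := by
  obtain ⟨t, -, rfl⟩ := hx
  rw [dcoord_eq_iff, add_sub_cancel_left, pdot_smul_left, pdot_rayDir, mul_zero]

lemma PerpTo.exists_eq_add_smul {i : Fin 3} {S : Set Pt} (h : PerpTo i S) {v x : Pt}
    (hv : v ∈ S) (hx : x ∈ S) : ∃ t : ℝ, x = v + t • rayDir i true :=
  ⟨_, by rw [← eq_smul_rayDir_of_pdot_eq_zero (h x hx v hv), add_sub_cancel]⟩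

lemma PerpTo.mono {i : Fin 3} {S T : Set Pt} (h : PerpTo i T) (hST : S ⊆ T) : PerpTo i S :=
  fun x hx y hy => h x (hST hx) y (hST hy)

lemma PerpTo.subset_affineSpan {i : Fin 3} {S : Set Pt} (h : PerpTo i S) {v : Pt}
    (hv : v ∈ S) : S ⊆ line[ℝ, v, v + rayDir i true] := by
  intro x hx
  obtain ⟨t, rfl⟩ := h.exists_eq_add_smul hv hx
  rw [← lineMap_add_right]
  exact lineMap_mem_affineSpan_pair t _ _

lemma IsLineL.perpTo_of_subset {i : Fin 3} {ℓ e : Set Pt} (hℓ : IsLineL ℓ) (he : IsLineL e)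
    (hsub : e ⊆ ℓ) (hperp : PerpTo i e) : PerpTo i ℓ := by
  obtain ⟨x, hx, y, hy, hxy⟩ := he.nontrivial
  have hspan := hℓ.subset_affineSpan_of_mem (hsub hx) (hsub hy) hxy
  intro z hz z' hz'
  obtain ⟨s, rfl⟩ := mem_affineSpan_pair_iff_exists_lineMap_eq.mp (hspan hz)
  obtain ⟨s', rfl⟩ := mem_affineSpan_pair_iff_exists_lineMap_eq.mp (hspan hz')
  have hdiff : lineMap x y s - lineMap x y s' = (s - s') • (y - x) := by
    simp only [lineMap_apply_module']
    module
  rw [hdiff, pdot_smul_left, hperp y hy x hx, mul_zero]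

lemma exists_subset_XiRay_of_isEnd {i : Fin 3} {S : Set Pt} {v : Pt} (hS : Convex ℝ S)
    (hperp : PerpTo i S) (hv : IsEnd v S) : ∃ s : Bool, S ⊆ XiRay i s v := by
  by_contra! h
  obtain ⟨x₁, hx₁, hx₁r⟩ := not_subset.mp (h true)
  obtain ⟨x₂, hx₂, hx₂r⟩ := not_subset.mp (h false)
  obtain ⟨t₁, rfl⟩ := hperp.exists_eq_add_smul hv.1 hx₁
  obtain ⟨t₂, rfl⟩ := hperp.exists_eq_add_smul hv.1 hx₂
  have ht₁ : t₁ < 0 := by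
    by_contra! ht
    exact hx₁r ⟨t₁, ht, rfl⟩
  have ht₂ : 0 < t₂ := by
    by_contra! ht
    exact hx₂r ⟨-t₂, neg_nonneg.mpr ht, by rw [rayDir_false, smul_neg, neg_smul, neg_neg]⟩
  have hr : v ≠ v + rayDir i true := by simpa [eq_comm] using rayDir_ne_zero i true
  rw [← lineMap_add_right] at hx₁ hx₂
  have hint := interiorPt_lineMap_of_convex hS hr hx₁ hx₂ ⟨ht₁, ht₂⟩
  rw [lineMap_apply_zero] at hint
  exact hv.2 hint

namespace Honeycomb

variable (H : Honeycomb) {e e' : Set Pt} {v : Pt}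

lemma isLineL (he : e ∈ H.edges) : IsLineL e := (H.pre.1 e he).1

lemma exists_perpTo (he : e ∈ H.edges) : ∃ i, PerpTo i e := (H.pre.1 e he).2

lemma isEnd_of_mem_of_mem (he : e ∈ H.edges) (he' : e' ∈ H.edges) (hne : e ≠ e')
    (hv : v ∈ e) (hv' : v ∈ e') : IsEnd v e :=
  ⟨hv, fun hint => H.no_cross e he e' he' hne v hint hv'⟩

lemma isEnd_of_mem_verts (hv : v ∈ H.verts) (he : e ∈ H.edges) (hve : v ∈ e) :
    IsEnd v e := by
  obtain ⟨e', he'⟩ : (H.edges.filter (IsEnd v ·)).Nonempty :=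
    Finset.card_pos.mp (by have := H.degree v hv; omega)
  rw [Finset.mem_filter] at he'
  by_cases hee' : e = e'
  · exact hee' ▸ he'.2
  · exact H.isEnd_of_mem_of_mem he he'.1 hee' hve he'.2.1

lemma exists_isEnd (he : e ∈ H.edges) : ∃ v ∈ H.verts, IsEnd v e := by
  obtain ⟨v, hv, hve⟩ := H.edge_touch e he
  exact ⟨v, hv, H.isEnd_of_mem_verts hv he hve⟩

end Honeycomb

namespace MaximalLine

variable {H : Honeycomb} {ℓ : Set Pt}

lemma subset_of_isLineL_union (hml : MaximalLine H ℓ) {S : Set Pt}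
    (hS : S ⊆ ⋃ e ∈ H.edges, e) (hunion : IsLineL (S ∪ ℓ)) : S ⊆ ℓ := by
  rw [← hml.2.2 (S ∪ ℓ) hunion (union_subset hS hml.2.1) subset_union_right]
  exact subset_union_left

lemma edge_subset_of_mem (hml : MaximalLine H ℓ) {e : Set Pt} (he : e ∈ H.edges) {x y : Pt}
    (hxe : x ∈ e) (hxℓ : x ∈ ℓ) (hye : y ∈ e) (hyℓ : y ∈ ℓ) (hxy : x ≠ y) : e ⊆ ℓ :=
  hml.subset_of_isLineL_union (subset_biUnion_of_mem (u := id) he)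
    ((H.isLineL he).union hml.1 hxy ((H.isLineL he).subset_affineSpan_of_mem hxe hye hxy)
      (hml.1.subset_affineSpan_of_mem hxℓ hyℓ hxy) ⟨x, hxe, hxℓ⟩)

/-- Every other edge meets `ℓ` in at most one point, and the connected infinite set `ℓ` cannot be
split into a closed set and finitely many further points. -/
lemma exists_edge_subset (hml : MaximalLine H ℓ) {x : Pt} (hx : x ∈ ℓ) :
    ∃ e ∈ H.edges, e ⊆ ℓ ∧ x ∈ e := by
  set A := ⋃ e ∈ H.edges.filter (· ⊆ ℓ), e
  set Z := ⋃ e ∈ H.edges.filter (¬ · ⊆ ℓ), e ∩ ℓ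
  have hA : IsClosed A := (Finset.finite_toSet _).isClosed_biUnion fun e he =>
    (H.isLineL (Finset.mem_filter.mp he).1).isClosed
  have hZ : Z.Finite := (Finset.finite_toSet _).biUnion fun e he => by
    obtain ⟨he, heℓ⟩ := Finset.mem_filter.mp he
    refine Subsingleton.finite fun y hy z hz => ?_
    by_contra hyz
    exact heℓ (hml.edge_subset_of_mem he hy.1 hy.2 hz.1 hz.2 hyz)
  have hcov : ℓ ⊆ A ∪ Z := by
    intro y hy
    obtain ⟨e, he, hye⟩ := mem_iUnion₂.mp (hml.2.1 hy)
    by_cases heℓ : e ⊆ ℓ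
    · exact Or.inl (mem_iUnion₂.mpr ⟨e, Finset.mem_filter.mpr ⟨he, heℓ⟩, hye⟩)
    · exact Or.inr (mem_iUnion₂.mpr ⟨e, Finset.mem_filter.mpr ⟨he, heℓ⟩, hye, hy⟩)
  obtain ⟨e, he, hxe⟩ := mem_iUnion₂.mp
    (hml.1.convex.isPreconnected.subset_of_subset_union_finite hml.1.infinite hA hZ hcov hx)
  exact ⟨e, (Finset.mem_filter.mp he).1, (Finset.mem_filter.mp he).2, hxe⟩

lemma eq_of_perpTo (hml : MaximalLine H ℓ) {ℓ' : Set Pt} (hml' : MaximalLine H ℓ') {i : Fin 3}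
    (h : PerpTo i ℓ) (h' : PerpTo i ℓ') {u : Pt} (hu : u ∈ ℓ) (hu' : u ∈ ℓ') : ℓ' = ℓ := by
  have hr : u ≠ u + rayDir i true := by simpa [eq_comm] using rayDir_ne_zero i true
  have hunion := hml'.1.union hml.1 hr (h'.subset_affineSpan hu') (h.subset_affineSpan hu)
    ⟨u, hu', hu⟩
  have h₁ := hml.subset_of_isLineL_union hml'.2.1 hunion
  have h₂ := hml'.subset_of_isLineL_union hml.2.1 (union_comm ℓ' ℓ ▸ hunion)
  exact h₁.antisymm h₂

end MaximalLine

namespace Conformable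

variable {H H' : Honeycomb} {α : Pt → Pt} {β : Set Pt → Set Pt} {e : Set Pt} {v : Pt}

/-- `β e` lies in the ray `Ξᵢˢ(α v)` matching the one containing `e`, on which `dᵢ` is
constant. -/
lemma forall_dcoord_eq_iff (hc : Conformable H H' α β) (he : e ∈ H.edges) {i : Fin 3}
    (hperp : PerpTo i e) (hv : v ∈ H.verts) (hve : IsEnd v e) (c : ℝ) :
    (∀ x ∈ β e, dcoord i x = c) ↔ dcoord i (α v) = c := by
  obtain ⟨s, hs⟩ := exists_subset_XiRay_of_isEnd (H.isLineL he).convex hperp hve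
  have hval x (hx : x ∈ β e) := dcoord_eq_of_mem_XiRay ((hc.2.2 v hv e he hve).2.2 i s hs hx)
  obtain ⟨x, hx⟩ := (H'.isLineL (hc.2.1.mapsTo he)).nontrivial.nonempty
  exact ⟨fun h => hval x hx ▸ h x hx, fun h x hx => (hval x hx).trans h⟩

lemma dcoord_apply_eq (hc : Conformable H H' α β) {ℓ : Set Pt} (hml : MaximalLine H ℓ)
    {e₀ : Set Pt} (he₀ : e₀ ∈ H.edges) (hdc : SameDc e₀ (β e₀)) (he₀ℓ : e₀ ⊆ ℓ) {i : Fin 3}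
    (hperp : PerpTo i ℓ) {u : Pt} (hu : u ∈ H.verts) (huℓ : u ∈ ℓ) :
    dcoord i (α u) = dcoord i u := by
  set P : Set Pt → Prop := fun e => ∀ x ∈ β e, dcoord i x = dcoord i u
  obtain ⟨y, hy⟩ := (H.isLineL he₀).nontrivial.nonempty
  have hPe₀ : P e₀ := fun x hx => by
    rw [← (hdc i (hperp.mono he₀ℓ)).2 y hy x hx]
    exact dcoord_eq_iff.mpr (hperp y (he₀ℓ hy) u huℓ)
  have hchain : ∀ e ∈ H.edges.filter (· ⊆ ℓ), ∀ e' ∈ H.edges.filter (· ⊆ ℓ),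
      (e ∩ e').Nonempty → P e → P e' := by
    rintro e he e' he' ⟨p, hpe, hpe'⟩ hPe
    rw [Finset.mem_filter] at he he'
    by_cases hee' : e = e'
    · exact hee' ▸ hPe
    have hp := H.isEnd_of_mem_of_mem he.1 he'.1 hee' hpe hpe'
    have hp' := H.isEnd_of_mem_of_mem he'.1 he.1 (Ne.symm hee') hpe' hpe
    have hpV := H.ends_mem e he.1 p hp
    exact (hc.forall_dcoord_eq_iff he'.1 (hperp.mono he'.2) hpV hp' _).mpr
      ((hc.forall_dcoord_eq_iff he.1 (hperp.mono he.2) hpV hp _).mp hPe)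
  have hcov : ℓ ⊆ ⋃ e ∈ H.edges.filter (· ⊆ ℓ), e := fun x hx => by
    obtain ⟨e, he, heℓ, hxe⟩ := hml.exists_edge_subset hx
    exact mem_iUnion₂.mpr ⟨e, Finset.mem_filter.mpr ⟨he, heℓ⟩, hxe⟩
  obtain ⟨e, he, hPe, hue⟩ := hml.1.convex.isPreconnected.exists_mem_of_closed_cover
    (f := fun e => e) (fun e he => (H.isLineL (Finset.mem_filter.mp he).1).isClosed) hcov
    hchain (Finset.mem_filter.mpr ⟨he₀, he₀ℓ⟩) hPe₀ ⟨y, he₀ℓ hy, hy⟩ u huℓ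
  rw [Finset.mem_filter] at he
  exact (hc.forall_dcoord_eq_iff he.1 (hperp.mono he.2) hu
    (H.isEnd_of_mem_verts hu he.1 hue) _).mp hPe

lemma apply_edge_eq (hc : Conformable H H' α β) (hfix : ∀ v ∈ H.verts, α v = v)
    (hV : H'.verts = H.verts) (he : e ∈ H.edges) : β e = e := by
  have hβe := H'.isLineL (hc.2.1.mapsTo he)
  rcases H.isLineL he with ⟨a, b, hab, rfl⟩ | ⟨a, d, hd, rfl⟩ | ⟨a, d, hd, rfl⟩
  · have hend : ∀ z, IsEnd z (segment ℝ a b) → IsEnd z (β (segment ℝ a b)) := fun z hz => by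
      have hzV := H.ends_mem _ he z hz
      simpa [hfix z hzV] using (hc.2.2 z hzV _ he hz).1
    exact hβe.eq_segment_of_isEnd hab (hend a (isEnd_left_segment a b))
      (hend b (isEnd_right_segment a b))
  · obtain ⟨v, hv, hve⟩ := H.exists_isEnd he
    obtain rfl := hve.eq_of_ray
    obtain ⟨i, hperp⟩ := H.exists_perpTo he
    obtain ⟨s, hs⟩ := exists_subset_XiRay_of_isEnd (H.isLineL he).convex hperp hve
    have heq := (H.isLineL he).eq_ray_of_isEnd hve (fun y hy => hy.eq_of_ray) hs
    have hc' := hc.2.2 v hv _ he hve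
    rw [hfix v hv] at hc'
    refine Eq.trans ?_ heq.symm
    refine hβe.eq_ray_of_isEnd hc'.1 (fun y hy => ?_) (hc'.2.2 i s hs)
    have hyV : y ∈ H.verts := hV ▸ H'.ends_mem _ (hc.2.1.mapsTo he) y hy
    have hye : y ∈ {x | ∃ t : ℝ, 0 ≤ t ∧ x = v + t • d} := heq ▸ hc'.2.2 i s hs hy.1
    exact (H.isEnd_of_mem_verts hyV he hye).eq_of_ray
  · obtain ⟨v, -, hve⟩ := H.exists_isEnd he
    exact absurd hve (not_isEnd_fullLine hd)

end Conformable

/-- sufficient condition (C).  If every vertex of H lies on two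
distinct maximal lines of H, each containing an edge from F, then H is F-extreme. -/
theorem stmt13 (H : Honeycomb) (F : Finset (Set Pt)) (hF : F ⊆ H.edges)
    (hyp : ∀ v ∈ H.verts, ∃ ℓ₁ ℓ₂ : Set Pt, ℓ₁ ≠ ℓ₂ ∧
      MaximalLine H ℓ₁ ∧ MaximalLine H ℓ₂ ∧ v ∈ ℓ₁ ∧ v ∈ ℓ₂ ∧
      (∃ e ∈ F, e ⊆ ℓ₁) ∧ (∃ e ∈ F, e ⊆ ℓ₂)) :
    FExtreme H F := by
  rintro ⟨H', α, β, hc, hdc, hne⟩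
  have hfix : ∀ u ∈ H.verts, α u = u := by
    intro u hu
    obtain ⟨ℓ₁, ℓ₂, hℓ, hml₁, hml₂, hu₁, hu₂, ⟨e₁, he₁F, he₁⟩, ⟨e₂, he₂F, he₂⟩⟩ := hyp u hu
    obtain ⟨i, hi⟩ := H.exists_perpTo (hF he₁F)
    obtain ⟨j, hj⟩ := H.exists_perpTo (hF he₂F)
    replace hi := hml₁.1.perpTo_of_subset (H.isLineL (hF he₁F)) he₁ hi
    replace hj := hml₂.1.perpTo_of_subset (H.isLineL (hF he₂F)) he₂ hj
    have hij : i ≠ j := by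
      rintro rfl
      exact hℓ (hml₁.eq_of_perpTo hml₂ hi hj hu₁ hu₂).symm
    exact eq_of_dcoord_eq hij (hc.dcoord_apply_eq hml₁ (hF he₁F) (hdc e₁ he₁F) he₁ hi hu hu₁)
      (hc.dcoord_apply_eq hml₂ (hF he₂F) (hdc e₂ he₂F) he₂ hj hu hu₂)
  have hV : H'.verts = H.verts :=
    Finset.coe_injective (hc.1.image_eq.symm.trans (EqOn.image_eq_self hfix))
  have hfixE : ∀ e ∈ H.edges, β e = e := fun e he => hc.apply_edge_eq hfix hV he
  have hE : H'.edges = H.edges :=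
    Finset.coe_injective (hc.2.1.image_eq.symm.trans (EqOn.image_eq_self hfixE))
  refine hne ⟨hV.symm, hE.symm, fun e he => ?_⟩
  obtain ⟨v, hv, hve⟩ := H.exists_isEnd he
  simpa [hfixE e he] using (hc.2.2 v hv e he hve).2.1

end
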